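/- Let X ∈ VPM°(n) and let V be an n×n real symmetric matrix, and set A = X^{−1/2} V X^{−1/2} and B = (I−X)^{−1/2} V (I−X)^{−1/2}. Then the log-barrier norm is bounded above by √n times the Hilbert–Finsler norm: sqrt( ‖A‖_F² + ‖B‖_F² ) ≤ √n · [ max( max(0, −λmin(A)), max(0, λmax(B)) ) + max( max(0, λmax(A)), max(0, −λmin(B)) ) ]. -/

import Mathlib

open Matrix

section SylvesterAux

open Finset

variable {n : ℕ}

/-- The (coercions to plain functions of the) eigenvectors of a Hermitian matrix. -/
private noncomputable def evec {A : Matrix (Fin n) (Fin n) ℝ} (hA : A.IsHermitian) :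
    Fin n → (Fin n → ℝ) :=
  fun j => (WithLp.equiv 2 _) (hA.eigenvectorBasis j)

private lemma sum_dot {ι : Type*} (s : Finset ι) (f : ι → (Fin n → ℝ)) (v : Fin n → ℝ) :
    (∑ i ∈ s, f i) ⬝ᵥ v = ∑ i ∈ s, f i ⬝ᵥ v := by
  simp only [dotProduct, Finset.sum_apply, Finset.sum_mul]
  exact Finset.sum_comm

private lemma dot_sum {ι : Type*} (s : Finset ι) (f : ι → (Fin n → ℝ)) (v : Fin n → ℝ) :
    v ⬝ᵥ (∑ i ∈ s, f i) = ∑ i ∈ s, v ⬝ᵥ f i := by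
  simp only [dotProduct, Finset.sum_apply, Finset.mul_sum]
  exact Finset.sum_comm

private lemma evec_dot {A : Matrix (Fin n) (Fin n) ℝ} (hA : A.IsHermitian) (i j : Fin n) :
    evec hA i ⬝ᵥ evec hA j = if i = j then 1 else 0 := by
  have h := orthonormal_iff_ite.mp hA.eigenvectorBasis.orthonormal i j
  rw [EuclideanSpace.inner_eq_star_dotProduct] at h
  rw [dotProduct_comm]
  simpa [evec, star_trivial] using h

private lemma mulVec_evec {A : Matrix (Fin n) (Fin n) ℝ} (hA : A.IsHermitian) (j : Fin n) :
    A *ᵥ evec hA j = hA.eigenvalues j • evec hA j :=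
  hA.mulVec_eigenvectorBasis j

private lemma dot_sum_sum {A : Matrix (Fin n) (Fin n) ℝ} (hA : A.IsHermitian)
    {ι : Type*} [Fintype ι] [DecidableEq ι] {f : ι → Fin n} (hf : Function.Injective f)
    (c d : ι → ℝ) :
    (∑ i, c i • evec hA (f i)) ⬝ᵥ (∑ j, d j • evec hA (f j)) = ∑ i, c i * d i := by
  rw [sum_dot]
  refine Finset.sum_congr rfl fun i _ => ?_
  rw [smul_dotProduct, dot_sum]
  simp only [dotProduct_smul, evec_dot, smul_eq_mul, hf.eq_iff, mul_ite, mul_one, mul_zero]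
  rw [Finset.sum_ite_eq Finset.univ i d]
  simp [mul_comm]

private lemma indep {A : Matrix (Fin n) (Fin n) ℝ} (hA : A.IsHermitian)
    {ι : Type*} [Fintype ι] [DecidableEq ι] {f : ι → Fin n} (hf : Function.Injective f) :
    LinearIndependent ℝ (fun i => evec hA (f i)) := by
  rw [Fintype.linearIndependent_iff]
  intro g hg i
  have h0 : (∑ i, g i • evec hA (f i)) ⬝ᵥ (∑ j, g j • evec hA (f j)) = 0 := by
    rw [hg, dotProduct_zero]
  rw [dot_sum_sum hA hf] at h0
  have := (Finset.sum_eq_zero_iff_of_nonneg (fun j _ => mul_self_nonneg (g j))).mp h0 i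
    (Finset.mem_univ i)
  exact mul_self_eq_zero.mp this

private lemma quad_sum {A : Matrix (Fin n) (Fin n) ℝ} (hA : A.IsHermitian)
    {ι : Type*} [Fintype ι] [DecidableEq ι] {f : ι → Fin n} (hf : Function.Injective f)
    (c : ι → ℝ) :
    (∑ i, c i • evec hA (f i)) ⬝ᵥ (A *ᵥ (∑ j, c j • evec hA (f j)))
      = ∑ i, hA.eigenvalues (f i) * c i ^ 2 := by
  have hAv : A *ᵥ (∑ j, c j • evec hA (f j))
      = ∑ j, (hA.eigenvalues (f j) * c j) • evec hA (f j) := by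
    rw [show A *ᵥ (∑ j, c j • evec hA (f j)) = A.mulVecLin (∑ j, c j • evec hA (f j)) from rfl,
      map_sum]
    refine Finset.sum_congr rfl fun j _ => ?_
    rw [_root_.map_smul, show A.mulVecLin (evec hA (f j)) = A *ᵥ evec hA (f j) from rfl,
      mulVec_evec hA (f j), smul_smul, mul_comm]
  rw [hAv, dot_sum_sum hA hf]
  refine Finset.sum_congr rfl fun i _ => ?_
  ring

/-- The span of the eigenvectors indexed by `S`. -/
private noncomputable def espan {A : Matrix (Fin n) (Fin n) ℝ} (hA : A.IsHermitian)
    (S : Finset (Fin n)) : Submodule ℝ (Fin n → ℝ) :=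
  Submodule.span ℝ (Set.range (fun i : {x // x ∈ S} => evec hA i.1))

private lemma finrank_espan {A : Matrix (Fin n) (Fin n) ℝ} (hA : A.IsHermitian)
    (S : Finset (Fin n)) : Module.finrank ℝ (espan hA S) = S.card := by
  rw [espan, finrank_span_eq_card (indep hA Subtype.val_injective), Fintype.card_coe]

private lemma quad_pos_on_espan {A : Matrix (Fin n) (Fin n) ℝ} (hA : A.IsHermitian)
    {x : Fin n → ℝ} (hx : x ∈ espan hA (univ.filter (fun i => 0 < hA.eigenvalues i)))
    (hx0 : x ≠ 0) : 0 < x ⬝ᵥ (A *ᵥ x) := by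
  obtain ⟨c, rfl⟩ := (Submodule.mem_span_range_iff_exists_fun ℝ).mp hx
  rw [quad_sum hA Subtype.val_injective]
  have hc : ∃ i, c i ≠ 0 := by
    by_contra h
    push_neg at h
    exact hx0 (by simp [h])
  obtain ⟨i, hi⟩ := hc
  refine Finset.sum_pos' (fun j _ => ?_) ⟨i, Finset.mem_univ i, ?_⟩
  · have := (Finset.mem_filter.mp j.2).2
    positivity
  · have h1 := (Finset.mem_filter.mp i.2).2
    have h2 : 0 < c i ^ 2 := by positivity
    exact mul_pos h1 h2

private lemma quad_nonpos_on_espan {A : Matrix (Fin n) (Fin n) ℝ} (hA : A.IsHermitian)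
    {x : Fin n → ℝ} (hx : x ∈ espan hA (univ.filter (fun i => ¬ 0 < hA.eigenvalues i))) :
    x ⬝ᵥ (A *ᵥ x) ≤ 0 := by
  obtain ⟨c, rfl⟩ := (Submodule.mem_span_range_iff_exists_fun ℝ).mp hx
  rw [quad_sum hA Subtype.val_injective]
  refine Finset.sum_nonpos fun j _ => ?_
  have hj := (Finset.mem_filter.mp j.2).2
  push_neg at hj
  have : 0 ≤ c j ^ 2 := sq_nonneg _
  exact mul_nonpos_of_nonpos_of_nonneg hj this

/-- Half of Sylvester's law of inertia: the number of positive eigenvalues does not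
drop under congruence. -/
private lemma posCount_le {A B C : Matrix (Fin n) (Fin n) ℝ} (hA : A.IsHermitian)
    (hB : B.IsHermitian) (hC : IsUnit C.det) (hCB : B = C * A * Cᵀ) :
    (univ.filter fun i => 0 < hA.eigenvalues i).card
      ≤ (univ.filter fun i => 0 < hB.eigenvalues i).card := by
  have hCt : IsUnit Cᵀ.det := by rwa [det_transpose]
  set D := (Cᵀ)⁻¹ with hD
  let e : (Fin n → ℝ) ≃ₗ[ℝ] (Fin n → ℝ) :=
    LinearEquiv.ofLinear D.mulVecLin (Cᵀ).mulVecLin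
      (by rw [← mulVecLin_mul, hD, nonsing_inv_mul _ hCt, mulVecLin_one])
      (by rw [← mulVecLin_mul, hD, mul_nonsing_inv _ hCt, mulVecLin_one])
  set P := univ.filter (fun i => 0 < hA.eigenvalues i) with hP
  set U : Submodule ℝ (Fin n → ℝ) := Submodule.map (e : (Fin n → ℝ) →ₗ[ℝ] (Fin n → ℝ))
    (espan hA P) with hU
  set W : Submodule ℝ (Fin n → ℝ) :=
    espan hB (univ.filter (fun i => ¬ 0 < hB.eigenvalues i)) with hW
  have hUr : Module.finrank ℝ U = P.card := by
    rw [hU, LinearEquiv.finrank_map_eq, finrank_espan]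
  have hqU : ∀ x ∈ U, x ≠ 0 → 0 < x ⬝ᵥ (B *ᵥ x) := by
    rintro x ⟨y, hy, rfl⟩ hx0
    have hy0 : y ≠ 0 := by rintro rfl; exact hx0 (map_zero _)
    show 0 < (D *ᵥ y) ⬝ᵥ (B *ᵥ (D *ᵥ y))
    have hback : Cᵀ *ᵥ (D *ᵥ y) = y := by
      rw [mulVec_mulVec, hD, mul_nonsing_inv _ hCt, one_mulVec]
    have key : (D *ᵥ y) ⬝ᵥ (B *ᵥ (D *ᵥ y)) = y ⬝ᵥ (A *ᵥ y) := by
      have h1 : B *ᵥ (D *ᵥ y) = C *ᵥ (A *ᵥ y) := by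
        rw [hCB]
        simp only [← mulVec_mulVec]
        rw [hback]
      rw [h1, dotProduct_mulVec]
      congr 1
      · nth_rewrite 1 [← transpose_transpose C]
        rw [vecMul_transpose, hback]
    rw [key]
    exact quad_pos_on_espan hA hy hy0
  have hdisj : U ⊓ W = ⊥ := by
    rw [Submodule.eq_bot_iff]
    intro x ⟨hxU, hxW⟩
    by_contra hx0
    exact absurd (quad_nonpos_on_espan hB hxW) (not_le.mpr (hqU x hxU hx0))
  have hsum := Submodule.finrank_sup_add_finrank_inf_eq U W
  rw [hdisj, finrank_bot, add_zero] at hsum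
  have hle : Module.finrank ℝ ↥(U ⊔ W) ≤ n := by
    have := Submodule.finrank_le (U ⊔ W : Submodule ℝ (Fin n → ℝ))
    rwa [Module.finrank_pi, Fintype.card_fin] at this
  have hWr : Module.finrank ℝ W = n - (univ.filter fun i => 0 < hB.eigenvalues i).card := by
    rw [hW, finrank_espan]
    have := Finset.card_filter_add_card_filter_not
      (s := univ) (p := fun i => 0 < hB.eigenvalues i)
    simp only [Finset.card_univ, Fintype.card_fin] at this
    omega
  have hBle : (univ.filter fun i => 0 < hB.eigenvalues i).card ≤ n := by
    calc _ ≤ (univ : Finset (Fin n)).card := Finset.card_filter_le _ _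
      _ = n := by simp
  omega

/-- Sylvester's law of inertia, positive part. -/
private lemma posCount_eq {A B C : Matrix (Fin n) (Fin n) ℝ} (hA : A.IsHermitian)
    (hB : B.IsHermitian) (hC : IsUnit C.det) (hCB : B = C * A * Cᵀ) :
    (univ.filter fun i => 0 < hA.eigenvalues i).card
      = (univ.filter fun i => 0 < hB.eigenvalues i).card := by
  refine le_antisymm (posCount_le hA hB hC hCB) (posCount_le (C := C⁻¹) hB hA
    (C.isUnit_nonsing_inv_det hC) ?_)
  rw [hCB, transpose_nonsing_inv]
  have h1 : C⁻¹ * C = 1 := nonsing_inv_mul _ hC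
  have h2 : Cᵀ * Cᵀ⁻¹ = 1 := mul_nonsing_inv _ (by rwa [det_transpose])
  calc A = (C⁻¹ * C) * A * (Cᵀ * Cᵀ⁻¹) := by rw [h1, h2, Matrix.one_mul, Matrix.mul_one]
    _ = C⁻¹ * (C * A * Cᵀ) * Cᵀ⁻¹ := by noncomm_ring

private lemma nonzeroCount_split {A : Matrix (Fin n) (Fin n) ℝ} (hA : A.IsHermitian) :
    (univ.filter fun i => hA.eigenvalues i ≠ 0).card
      = (univ.filter fun i => 0 < hA.eigenvalues i).card
        + (univ.filter fun i => hA.eigenvalues i < 0).card := by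
  rw [← Finset.card_union_of_disjoint]
  · congr 1
    rw [← Finset.filter_or]
    exact Finset.filter_congr fun i _ => by
      constructor
      · intro h; rcases h.lt_or_gt with h' | h'
        · exact Or.inr h'
        · exact Or.inl h'
      · rintro (h | h) <;> [exact h.ne'; exact h.ne]
  · rw [Finset.disjoint_filter]
    intro i _ h1
    exact not_lt.mpr h1.le

/-- Sylvester's law of inertia, negative part. -/
private lemma negCount_eq {A B C : Matrix (Fin n) (Fin n) ℝ} (hA : A.IsHermitian)
    (hB : B.IsHermitian) (hC : IsUnit C.det) (hCB : B = C * A * Cᵀ) :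
    (univ.filter fun i => hA.eigenvalues i < 0).card
      = (univ.filter fun i => hB.eigenvalues i < 0).card := by
  have hrank : B.rank = A.rank := by
    rw [hCB]
    rw [rank_mul_eq_left_of_isUnit_det Cᵀ (C * A) (by rwa [det_transpose]),
      rank_mul_eq_right_of_isUnit_det C A hC]
  have hA' : A.rank = (univ.filter fun i => hA.eigenvalues i ≠ 0).card := by
    rw [hA.rank_eq_card_non_zero_eigs, Fintype.card_subtype]
  have hB' : B.rank = (univ.filter fun i => hB.eigenvalues i ≠ 0).card := by
    rw [hB.rank_eq_card_non_zero_eigs, Fintype.card_subtype]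
  have h1 := nonzeroCount_split hA
  have h2 := nonzeroCount_split hB
  have h3 := posCount_eq hA hB hC hCB
  omega

private lemma spectrum_eq_range {A : Matrix (Fin n) (Fin n) ℝ} (hA : A.IsHermitian) :
    spectrum ℝ A = Set.range hA.eigenvalues := by
  apply Set.eq_of_subset_of_subset
  · intro μ hμ
    by_contra hr
    rw [Set.mem_range] at hr
    push_neg at hr
    rw [spectrum.mem_iff] at hμ
    apply hμ
    rw [Matrix.isUnit_iff_isUnit_det]
    set U : Matrix (Fin n) (Fin n) ℝ := ↑hA.eigenvectorUnitary with hUdef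
    have hU1 : U * star U = 1 := (Matrix.mem_unitaryGroup_iff).mp hA.eigenvectorUnitary.2
    have key : algebraMap ℝ (Matrix (Fin n) (Fin n) ℝ) μ - A
        = U * (diagonal (fun i => μ - hA.eigenvalues i)) * star U := by
      have hsc : algebraMap ℝ (Matrix (Fin n) (Fin n) ℝ) μ
          = μ • (1 : Matrix (Fin n) (Fin n) ℝ) := by
        rw [Algebra.algebraMap_eq_smul_one]
      have hdiag : diagonal (fun i : Fin n => μ - hA.eigenvalues i)
          = μ • (1 : Matrix (Fin n) (Fin n) ℝ) - diagonal (RCLike.ofReal ∘ hA.eigenvalues) := by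
        rw [smul_eq_diagonal_mul]
        ext i j
        by_cases h : i = j <;> simp [diagonal, h]
      rw [hdiag, Matrix.mul_sub, Matrix.sub_mul]
      congr 1
      · rw [Matrix.mul_smul, Matrix.mul_one, Matrix.smul_mul, hU1, hsc]
      · exact hA.spectral_theorem
    rw [key, det_mul, det_mul, mul_comm, ← mul_assoc, ← det_mul,
      show star U * U = 1 from (Matrix.mem_unitaryGroup_iff').mp hA.eigenvectorUnitary.2,
      det_one, one_mul, det_diagonal]
    rw [isUnit_iff_ne_zero]
    exact Finset.prod_ne_zero_iff.mpr fun i _ => sub_ne_zero.mpr (fun h => hr i h.symm)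
  · rintro _ ⟨i, rfl⟩
    exact hA.eigenvalues_mem_spectrum_real i

private lemma eig_le_lmax {A : Matrix (Fin n) (Fin n) ℝ} (hA : A.IsHermitian) (i : Fin n) :
    hA.eigenvalues i ≤ sSup (spectrum ℝ A) := by
  refine le_csSup ?_ (hA.eigenvalues_mem_spectrum_real i)
  rw [spectrum_eq_range hA]
  exact (Set.finite_range _).bddAbove

private lemma lmin_le_eig {A : Matrix (Fin n) (Fin n) ℝ} (hA : A.IsHermitian) (i : Fin n) :
    sInf (spectrum ℝ A) ≤ hA.eigenvalues i := by
  refine csInf_le ?_ (hA.eigenvalues_mem_spectrum_real i)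
  rw [spectrum_eq_range hA]
  exact (Set.finite_range _).bddBelow

private lemma trace_sq {A : Matrix (Fin n) (Fin n) ℝ} (hA : A.IsHermitian) :
    Matrix.trace (A * A) = ∑ i, hA.eigenvalues i ^ 2 := by
  set U : Matrix (Fin n) (Fin n) ℝ := ↑hA.eigenvectorUnitary with hUdef
  have hU1 : star U * U = 1 := (Matrix.mem_unitaryGroup_iff').mp hA.eigenvectorUnitary.2
  set D : Matrix (Fin n) (Fin n) ℝ := diagonal (RCLike.ofReal ∘ hA.eigenvalues) with hDdef
  have h1 : A * A = U * (D * D) * star U := by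
    conv_lhs => rw [hA.spectral_theorem]
    calc U * D * star U * (U * D * star U)
        = U * (D * ((star U * U) * (D * star U))) := by noncomm_ring
      _ = U * (D * D) * star U := by rw [hU1, Matrix.one_mul]; noncomm_ring
  rw [h1, Matrix.trace_mul_cycle, ← Matrix.mul_assoc, hU1, Matrix.one_mul, hDdef,
    diagonal_mul_diagonal, Matrix.trace_diagonal]
  refine Finset.sum_congr rfl fun i _ => ?_
  simp [pow_two]

private lemma trace_transpose_mul_self_nonneg (A : Matrix (Fin n) (Fin n) ℝ) :
    0 ≤ Matrix.trace (Aᵀ * A) := by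
  rw [Matrix.trace]
  refine Finset.sum_nonneg fun j _ => ?_
  rw [Matrix.diag_apply, Matrix.mul_apply]
  exact Finset.sum_nonneg fun i _ => by simpa using mul_self_nonneg (A i j)

end SylvesterAux

/-- The open variance-precision bicone VPM°(n): symmetric matrices `X` with
`X` and `I - X` positive definite. -/
def VPM (n : ℕ) : Set (Matrix (Fin n) (Fin n) ℝ) :=
  {X | X.PosDef ∧ (1 - X).PosDef}

/-- Largest (real) eigenvalue of a matrix, as the supremum of its real spectrum. -/
noncomputable def lmax {n : ℕ} (S : Matrix (Fin n) (Fin n) ℝ) : ℝ := sSup (spectrum ℝ S)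

/-- Smallest (real) eigenvalue of a matrix, as the infimum of its real spectrum. -/
noncomputable def lmin {n : ℕ} (S : Matrix (Fin n) (Fin n) ℝ) : ℝ := sInf (spectrum ℝ S)

/-- Frobenius norm of a real matrix. -/
noncomputable def frobNorm {n : ℕ} (S : Matrix (Fin n) (Fin n) ℝ) : ℝ :=
  Real.sqrt (Matrix.trace (Sᵀ * S))

/-- Port: `Matrix.PosSemidef.sqrt` was removed from Mathlib; restored here with its old
definition `U * diagonal (√ ∘ eigenvalues) * U⋆`. -/
noncomputable def Matrix.PosSemidef.sqrt {m : Type*} [Fintype m] [DecidableEq m]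
    {M : Matrix m m ℝ} (hM : M.PosSemidef) : Matrix m m ℝ :=
  hM.1.eigenvectorUnitary.1 * diagonal ((fun x : ℝ => Real.sqrt x) ∘ hM.1.eigenvalues) *
    (star hM.1.eigenvectorUnitary : Matrix m m ℝ)

lemma Matrix.PosSemidef.posSemidef_sqrt {m : Type*} [Fintype m] [DecidableEq m]
    {M : Matrix m m ℝ} (hM : M.PosSemidef) : hM.sqrt.PosSemidef := by
  have hd : (diagonal ((fun x : ℝ => Real.sqrt x) ∘ hM.1.eigenvalues)).PosSemidef :=
    posSemidef_diagonal_iff.mpr fun i => Real.sqrt_nonneg _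
  have := hd.mul_mul_conjTranspose_same (hM.1.eigenvectorUnitary.1)
  unfold Matrix.PosSemidef.sqrt
  convert this using 2
  rfl

lemma Matrix.PosSemidef.sqrt_mul_self {m : Type*} [Fintype m] [DecidableEq m]
    {M : Matrix m m ℝ} (hM : M.PosSemidef) : hM.sqrt * hM.sqrt = M := by
  set U : Matrix m m ℝ := hM.1.eigenvectorUnitary.1 with hU
  have hU1 : star U * U = 1 := (Matrix.mem_unitaryGroup_iff').mp hM.1.eigenvectorUnitary.2
  set D := diagonal ((fun x : ℝ => Real.sqrt x) ∘ hM.1.eigenvalues)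
  have hD : D * D = diagonal (RCLike.ofReal ∘ hM.1.eigenvalues) := by
    simp only [D, diagonal_mul_diagonal]
    congr 1; funext i
    simp [Real.mul_self_sqrt (hM.eigenvalues_nonneg i)]
  have e : hM.sqrt * hM.sqrt = U * (D * D) * star U := by
    unfold Matrix.PosSemidef.sqrt
    calc U * D * star U * (U * D * star U) = U * (D * ((star U * U) * (D * star U))) := by
          noncomm_ring
      _ = U * (D * D) * star U := by rw [hU1, Matrix.one_mul]; noncomm_ring
  rw [e, hD]
  exact hM.1.spectral_theorem.symm

/-- The log-barrier norm is bounded above by `√n` times the Hilbert–Finsler norm: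
`‖V‖^Ψ_X ≤ √n · ‖V‖^H_X`. -/
theorem barrier_norm_le_sqrt_n_finsler_norm {n : ℕ}
    (X V : Matrix (Fin n) (Fin n) ℝ) (hX : X ∈ VPM n) (hV : V.IsHermitian)
    (A B : Matrix (Fin n) (Fin n) ℝ)
    (hA : A = hX.1.posSemidef.sqrt⁻¹ * V * hX.1.posSemidef.sqrt⁻¹)
    (hB : B = hX.2.posSemidef.sqrt⁻¹ * V * hX.2.posSemidef.sqrt⁻¹) :
    Real.sqrt (frobNorm A ^ 2 + frobNorm B ^ 2)
      ≤ Real.sqrt n *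
        (max (max 0 (-lmin A)) (max 0 (lmax B))
          + max (max 0 (lmax A)) (max 0 (-lmin B))) := by
  classical
  set S := hX.1.posSemidef.sqrt with hSdef
  set T := hX.2.posSemidef.sqrt with hTdef
  have hS : S.IsHermitian := hX.1.posSemidef.posSemidef_sqrt.1
  have hT : T.IsHermitian := hX.2.posSemidef.posSemidef_sqrt.1
  have hSdet : IsUnit S.det := by
    have h : S.det * S.det = X.det := by
      rw [← Matrix.det_mul, hX.1.posSemidef.sqrt_mul_self]
    rw [isUnit_iff_ne_zero]
    intro h0
    rw [h0, mul_zero] at h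
    exact hX.1.det_pos.ne' h.symm
  have hTdet : IsUnit T.det := by
    have h : T.det * T.det = (1 - X).det := by
      rw [← Matrix.det_mul, hX.2.posSemidef.sqrt_mul_self]
    rw [isUnit_iff_ne_zero]
    intro h0
    rw [h0, mul_zero] at h
    exact hX.2.det_pos.ne' h.symm
  -- A and B are Hermitian
  have hSinv : (S⁻¹).IsHermitian := hS.inv
  have hTinv : (T⁻¹).IsHermitian := hT.inv
  have hAh : A.IsHermitian := by
    have h := isHermitian_mul_mul_conjTranspose (S⁻¹) hV
    rw [hSinv.eq] at h
    rwa [← hA] at h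
  have hBh : B.IsHermitian := by
    have h := isHermitian_mul_mul_conjTranspose (T⁻¹) hV
    rw [hTinv.eq] at h
    rwa [← hB] at h
  -- the congruence relating A and B
  set C := T⁻¹ * S with hCdef
  have hCdet : IsUnit C.det := by
    rw [hCdef, Matrix.det_mul]
    exact (T.isUnit_nonsing_inv_det hTdet).mul hSdet
  have hCt : Cᵀ = S * T⁻¹ := by
    rw [hCdef, Matrix.transpose_mul, ← conjTranspose_eq_transpose_of_trivial,
      ← conjTranspose_eq_transpose_of_trivial, hS.eq, hTinv.eq]
  have hCB : B = C * A * Cᵀ := by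
    rw [hCt, hCdef, hA, hB]
    have e1 : S * S⁻¹ = 1 := mul_nonsing_inv _ hSdet
    have e2 : S⁻¹ * S = 1 := nonsing_inv_mul _ hSdet
    calc T⁻¹ * V * T⁻¹ = T⁻¹ * ((S * S⁻¹) * V * (S⁻¹ * S)) * T⁻¹ := by
          rw [e1, e2, Matrix.one_mul, Matrix.mul_one]
      _ = T⁻¹ * S * (S⁻¹ * V * S⁻¹) * (S * T⁻¹) := by noncomm_ring
  -- eigenvalue counts
  set eA := hAh.eigenvalues with heA
  set eB := hBh.eigenvalues with heB
  set m1 := max (max 0 (-lmin A)) (max 0 (lmax B)) with hm1def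
  set m2 := max (max 0 (lmax A)) (max 0 (-lmin B)) with hm2def
  have hm1 : (0:ℝ) ≤ m1 := le_max_of_le_left (le_max_left _ _)
  have hm2 : (0:ℝ) ≤ m2 := le_max_of_le_left (le_max_left _ _)
  have hboundA : ∀ i, eA i ^ 2
      ≤ (if 0 < eA i then m2 ^ 2 else 0) + (if eA i < 0 then m1 ^ 2 else 0) := by
    intro i
    by_cases h : 0 < eA i
    · rw [if_pos h, if_neg (not_lt.mpr h.le), add_zero]
      refine sq_le_sq' (le_trans (neg_nonpos.mpr hm2) h.le) ?_
      calc eA i ≤ lmax A := eig_le_lmax hAh i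
        _ ≤ max 0 (lmax A) := le_max_right _ _
        _ ≤ m2 := le_max_left _ _
    · by_cases h2 : eA i < 0
      · rw [if_neg h, if_pos h2, zero_add]
        refine sq_le_sq' ?_ (le_trans h2.le hm1)
        rw [neg_le]
        calc -eA i ≤ -lmin A := neg_le_neg (lmin_le_eig hAh i)
          _ ≤ max 0 (-lmin A) := le_max_right _ _
          _ ≤ m1 := le_max_left _ _
      · have h3 : eA i = 0 := le_antisymm (not_lt.mp h) (not_lt.mp h2)
        simp [h3]
  have hboundB : ∀ i, eB i ^ 2
      ≤ (if 0 < eB i then m1 ^ 2 else 0) + (if eB i < 0 then m2 ^ 2 else 0) := by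
    intro i
    by_cases h : 0 < eB i
    · rw [if_pos h, if_neg (not_lt.mpr h.le), add_zero]
      refine sq_le_sq' (le_trans (neg_nonpos.mpr hm1) h.le) ?_
      calc eB i ≤ lmax B := eig_le_lmax hBh i
        _ ≤ max 0 (lmax B) := le_max_right _ _
        _ ≤ m1 := le_max_right _ _
    · by_cases h2 : eB i < 0
      · rw [if_neg h, if_pos h2, zero_add]
        refine sq_le_sq' ?_ (le_trans h2.le hm2)
        rw [neg_le]
        calc -eB i ≤ -lmin B := neg_le_neg (lmin_le_eig hBh i)
          _ ≤ max 0 (-lmin B) := le_max_right _ _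
          _ ≤ m2 := le_max_right _ _
      · have h3 : eB i = 0 := le_antisymm (not_lt.mp h) (not_lt.mp h2)
        simp [h3]
  set pA := (Finset.univ.filter fun i => 0 < eA i).card with hpA
  set nA := (Finset.univ.filter fun i => eA i < 0).card with hnA
  set pB := (Finset.univ.filter fun i => 0 < eB i).card with hpB
  set nB := (Finset.univ.filter fun i => eB i < 0).card with hnB
  have hpp : pA = pB := posCount_eq hAh hBh hCdet hCB
  have hnn : nA = nB := negCount_eq hAh hBh hCdet hCB
  have hpn : pA + nA ≤ n := by
    have h1 := nonzeroCount_split hAh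
    have h2 : (Finset.univ.filter fun i => hAh.eigenvalues i ≠ 0).card ≤ n := by
      calc _ ≤ (Finset.univ : Finset (Fin n)).card := Finset.card_filter_le _ _
        _ = n := by simp
    rw [hpA, hnA, heA]
    omega
  have hsumA : ∑ i, eA i ^ 2 ≤ pA * m2 ^ 2 + nA * m1 ^ 2 := by
    calc ∑ i, eA i ^ 2
        ≤ ∑ i, ((if 0 < eA i then m2 ^ 2 else 0) + (if eA i < 0 then m1 ^ 2 else 0)) :=
          Finset.sum_le_sum fun i _ => hboundA i
      _ = pA * m2 ^ 2 + nA * m1 ^ 2 := by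
          rw [Finset.sum_add_distrib, ← Finset.sum_filter, ← Finset.sum_filter,
            Finset.sum_const, Finset.sum_const, nsmul_eq_mul, nsmul_eq_mul]
  have hsumB : ∑ i, eB i ^ 2 ≤ pB * m1 ^ 2 + nB * m2 ^ 2 := by
    calc ∑ i, eB i ^ 2
        ≤ ∑ i, ((if 0 < eB i then m1 ^ 2 else 0) + (if eB i < 0 then m2 ^ 2 else 0)) :=
          Finset.sum_le_sum fun i _ => hboundB i
      _ = pB * m1 ^ 2 + nB * m2 ^ 2 := by
          rw [Finset.sum_add_distrib, ← Finset.sum_filter, ← Finset.sum_filter,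
            Finset.sum_const, Finset.sum_const, nsmul_eq_mul, nsmul_eq_mul]
  have hkey : Matrix.trace (A * A) + Matrix.trace (B * B) ≤ n * (m1 + m2) ^ 2 := by
    rw [trace_sq hAh, trace_sq hBh]
    have hc : (pA : ℝ) + nA ≤ n := by exact_mod_cast hpn
    have e1 : (pA : ℝ) * m2 ^ 2 + nA * m1 ^ 2 + (pB * m1 ^ 2 + nB * m2 ^ 2)
        = ((pA : ℝ) + nA) * (m1 ^ 2 + m2 ^ 2) := by
      rw [← hpp, ← hnn]; ring
    have e2 : ((pA : ℝ) + nA) * (m1 ^ 2 + m2 ^ 2) ≤ n * (m1 ^ 2 + m2 ^ 2) :=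
      mul_le_mul_of_nonneg_right hc (by positivity)
    have e3 : (n : ℝ) * (m1 ^ 2 + m2 ^ 2) ≤ n * (m1 + m2) ^ 2 := by
      refine mul_le_mul_of_nonneg_left ?_ (Nat.cast_nonneg n)
      nlinarith [mul_nonneg hm1 hm2]
    linarith
  -- final assembly
  have hfrobA : frobNorm A ^ 2 = Matrix.trace (A * A) := by
    rw [frobNorm, Real.sq_sqrt (trace_transpose_mul_self_nonneg A)]
    congr 1
    rw [← conjTranspose_eq_transpose_of_trivial, hAh.eq]
  have hfrobB : frobNorm B ^ 2 = Matrix.trace (B * B) := by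
    rw [frobNorm, Real.sq_sqrt (trace_transpose_mul_self_nonneg B)]
    congr 1
    rw [← conjTranspose_eq_transpose_of_trivial, hBh.eq]
  rw [hfrobA, hfrobB]
  calc Real.sqrt (Matrix.trace (A * A) + Matrix.trace (B * B))
      ≤ Real.sqrt (n * (m1 + m2) ^ 2) := Real.sqrt_le_sqrt hkey
    _ = Real.sqrt n * (m1 + m2) := by
        rw [Real.sqrt_mul (Nat.cast_nonneg n), Real.sqrt_sq (by positivity)]
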